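/- arXiv:1701.08249 — 3 statements merged into one kernel-verified Lean document; each statement's English description precedes it below -/
import Mathlib

section
/- Suppose the inequality sup{∫_Ω e^{32π² u²} dx : u ∈ H₀²(Ω), ‖Δu‖₂² − α‖u‖₂² ≤ 1} < ∞ holds for every α ∈ [0, λ₁(Ω)). Then for every polynomial q(t) = 1 + a₁ t + ⋯ + a_k t^k with 0 ≤ a₁ < λ₁(Ω) and 0 ≤ a_{j+1} ≤ λ₁(Ω) a_j for 1 ≤ j ≤ k−1, one has sup{∫_Ω e^{32π² q(‖u‖₂²) u²} dx : u ∈ H₀²(Ω), ‖Δu‖₂ ≤ 1} < ∞. -/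
/-! Since `‖Δu‖₂ ≤ 1` forces `λ₁ t ≤ 1` for `t = ‖u‖₂²`, the growth condition on the `a_j` gives
`q(t) - 1 ≤ a₁ t ∑_{j<k} (λ₁ t)^j`. For `α = (k+1) a₁ λ₁ / (λ₁ + k a₁) < λ₁` this yields
`q(t) (1 - α t) ≤ 1`, so `√q(t) · u` satisfies `‖Δ(√q u)‖₂² - α ‖√q u‖₂² ≤ 1` and the Tintarev-type
inequality applies to it. -/

open MeasureTheory Real Filter Set

noncomputable section

abbrev E4 := EuclideanSpace ℝ (Fin 4)

/-- The (classical) Laplacian on `ℝ⁴`. -/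
def lap (f : E4 → ℝ) (x : E4) : ℝ :=
  ∑ i : Fin 4, fderiv ℝ (fun y => fderiv ℝ f y (EuclideanSpace.single i 1)) x
    (EuclideanSpace.single i 1)

/-- Smooth functions compactly supported in `Ω` (a dense subspace of `H₀²(Ω)`). -/
def Adm (Ω : Set E4) (f : E4 → ℝ) : Prop :=
  ContDiff ℝ (⊤ : ℕ∞) f ∧ HasCompactSupport f ∧ tsupport f ⊆ Ω

/-- The first eigenvalue of the bi-Laplacian `Δ²` on `Ω` with Dirichlet condition. -/
def lam1 (Ω : Set E4) : ℝ :=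
  sInf {r | ∃ f, Adm Ω f ∧ (∫ x, (f x) ^ 2) ≠ 0 ∧
    r = (∫ x, (lap f x) ^ 2) / ∫ x, (f x) ^ 2}

lemma lap_const_mul (c : ℝ) {f : E4 → ℝ} (hf : ContDiff ℝ 2 f) (x : E4) :
    lap (fun y => c * f y) x = c * lap f x := by
  have hdf : Differentiable ℝ f := hf.differentiable (by norm_num)
  have hdf' : ∀ v : E4, Differentiable ℝ (fun y => fderiv ℝ f y v) := fun v =>
    ((hf.fderiv_right (m := 1) (by norm_num)).differentiable (by norm_num)).clm_apply
      (differentiable_const v)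
  unfold lap
  rw [Finset.mul_sum]
  refine Finset.sum_congr rfl fun i _ => ?_
  have hfirst : (fun y => fderiv ℝ (fun z => c * f z) y (EuclideanSpace.single i 1))
      = fun y => c * fderiv ℝ f y (EuclideanSpace.single i 1) := by
    funext y
    simp [fderiv_const_mul (hdf y)]
  simp [hfirst, fderiv_const_mul (hdf' _ x)]

lemma Adm.const_mul {Ω : Set E4} {f : E4 → ℝ} (hf : Adm Ω f) (c : ℝ) :
    Adm Ω (fun y => c * f y) :=
  ⟨contDiff_const.mul hf.1, hf.2.1.mul_left,
    (closure_mono (Function.support_mul_subset_right _ _)).trans hf.2.2⟩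

lemma lam1_mul_integral_sq_le (Ω : Set E4) {f : E4 → ℝ} (hf : Adm Ω f) :
    lam1 Ω * ∫ x, (f x) ^ 2 ≤ ∫ x, (lap f x) ^ 2 := by
  have hnorm : 0 ≤ ∫ x, (f x) ^ 2 := integral_nonneg fun x => sq_nonneg _
  rcases hnorm.eq_or_lt with h | h
  · rw [← h, mul_zero]
    exact integral_nonneg fun x => sq_nonneg _
  · have hbdd : BddBelow {r | ∃ f, Adm Ω f ∧ (∫ x, (f x) ^ 2) ≠ 0 ∧
        r = (∫ x, (lap f x) ^ 2) / ∫ x, (f x) ^ 2} := by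
      refine ⟨0, ?_⟩
      rintro r ⟨g, -, -, rfl⟩
      exact div_nonneg (integral_nonneg fun x => sq_nonneg _)
        (integral_nonneg fun x => sq_nonneg _)
    have hle : lam1 Ω ≤ (∫ x, (lap f x) ^ 2) / ∫ x, (f x) ^ 2 :=
      csInf_le hbdd ⟨f, hf, h.ne', rfl⟩
    rwa [le_div_iff₀ h] at hle

lemma le_pow_mul_of_le_mul {k : ℕ} {a : ℕ → ℝ} {L : ℝ} (hL : 0 ≤ L)
    (hrec : ∀ j, 1 ≤ j → j + 1 ≤ k → a (j + 1) ≤ L * a j) :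
    ∀ j < k, a (j + 1) ≤ L ^ j * a 1 := by
  intro j
  induction j with
  | zero => simp
  | succ n ih =>
    intro hnk
    calc a (n + 1 + 1) ≤ L * a (n + 1) := hrec (n + 1) (by omega) (by omega)
      _ ≤ L * (L ^ n * a 1) := mul_le_mul_of_nonneg_left (ih (by omega)) hL
      _ = L ^ (n + 1) * a 1 := by ring

lemma geom_sum_mul_one_sub_mul_le {s β : ℝ} (hs0 : 0 ≤ s) (hs1 : s ≤ 1) (hβ : β ≤ 1) (k : ℕ) :
    (∑ j ∈ Finset.range k, s ^ j) * (1 - β * s) ≤ 1 + (1 - β) * k := by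
  have hgeom : (∑ j ∈ Finset.range k, s ^ j) * (1 - s) ≤ 1 := by
    rw [geom_sum_mul_neg]
    linarith [pow_nonneg hs0 k]
  have hsum_le : s * ∑ j ∈ Finset.range k, s ^ j ≤ k := by
    calc s * ∑ j ∈ Finset.range k, s ^ j ≤ ∑ j ∈ Finset.range k, s ^ (j + 1) := by
          rw [Finset.mul_sum]; exact le_of_eq (Finset.sum_congr rfl fun j _ => by ring)
      _ ≤ ∑ _j ∈ Finset.range k, (1 : ℝ) :=
          Finset.sum_le_sum fun j _ => pow_le_one₀ hs0 hs1
      _ = k := by simp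
  nlinarith [mul_le_mul_of_nonneg_left hsum_le (sub_nonneg.2 hβ)]

lemma sum_le_mul_geom_sum {k : ℕ} {a : ℕ → ℝ} {L t : ℝ} (ht : 0 ≤ t)
    (hcoef : ∀ j < k, a (j + 1) ≤ L ^ j * a 1) :
    ∑ j ∈ Finset.range k, a (j + 1) * t ^ (j + 1) ≤
      a 1 * t * ∑ j ∈ Finset.range k, (L * t) ^ j := by
  rw [Finset.mul_sum]
  refine Finset.sum_le_sum fun j hj => ?_
  calc a (j + 1) * t ^ (j + 1) ≤ L ^ j * a 1 * t ^ (j + 1) :=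
        mul_le_mul_of_nonneg_right (hcoef j (Finset.mem_range.mp hj)) (pow_nonneg ht _)
    _ = a 1 * t * (L * t) ^ j := by ring

lemma exists_lt_forall_mul_one_sub_mul_le {k : ℕ} {a : ℕ → ℝ} {L : ℝ} (ha1 : 0 ≤ a 1)
    (ha1L : a 1 < L) (hrec : ∀ j, 1 ≤ j → j + 1 ≤ k → a (j + 1) ≤ L * a j) :
    ∃ α, 0 ≤ α ∧ α < L ∧ ∀ t, 0 ≤ t → L * t ≤ 1 →
      (1 + ∑ j ∈ Finset.range k, a (j + 1) * t ^ (j + 1)) * (1 - α * t) ≤ 1 := by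
  have hL : 0 < L := ha1.trans_lt ha1L
  have hden : 0 < L + k * a 1 := by positivity
  set β := (k + 1) * a 1 / (L + k * a 1) with hβ
  have hβ0 : 0 ≤ β := by positivity
  have hβ1 : β < 1 := by
    rw [hβ, div_lt_one hden]
    linarith
  have hβL : a 1 * (1 + (1 - β) * k) = β * L := by
    rw [hβ]
    field_simp
    ring
  refine ⟨β * L, by positivity, by nlinarith, fun t ht hLt => ?_⟩
  have hαt : 0 ≤ 1 - β * L * t := by nlinarith
  have hS := sum_le_mul_geom_sum (a := a) ht (le_pow_mul_of_le_mul hL.le hrec)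
  have hG := geom_sum_mul_one_sub_mul_le (mul_nonneg hL.le ht) hLt hβ1.le k
  calc (1 + ∑ j ∈ Finset.range k, a (j + 1) * t ^ (j + 1)) * (1 - β * L * t)
      ≤ (1 - β * L * t) +
          a 1 * t * ((∑ j ∈ Finset.range k, (L * t) ^ j) * (1 - β * (L * t))) := by
        nlinarith [mul_le_mul_of_nonneg_right hS hαt]
    _ ≤ (1 - β * L * t) + a 1 * t * (1 + (1 - β) * k) := by
        gcongr
    _ = 1 := by linear_combination t * hβL

lemma setIntegral_exp_mul_sq_le_of_rescaled {Ω : Set E4} {α C q : ℝ}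
    (hC : ∀ f : E4 → ℝ, Adm Ω f → (∫ x, (lap f x) ^ 2) - α * ∫ x, (f x) ^ 2 ≤ 1 →
      (∫ x in Ω, exp (32 * π ^ 2 * (f x) ^ 2)) ≤ C)
    {f : E4 → ℝ} (hf : Adm Ω f) (hq : 0 ≤ q)
    (hqf : q * ((∫ x, (lap f x) ^ 2) - α * ∫ x, (f x) ^ 2) ≤ 1) :
    (∫ x in Ω, exp (32 * π ^ 2 * q * (f x) ^ 2)) ≤ C := by
  have hsq : √q ^ 2 = q := sq_sqrt hq
  have hrescaled := hC _ (hf.const_mul √q) <| by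
    simp only [lap_const_mul √q (hf.1.of_le (by norm_cast)), mul_pow, hsq,
      integral_const_mul]
    linarith
  simpa only [mul_pow, hsq, mul_assoc] using hrescaled

theorem stmt4_general (Ω : Set E4)
    (H : ∀ α : ℝ, 0 ≤ α → α < lam1 Ω → ∃ C : ℝ, ∀ f : E4 → ℝ, Adm Ω f →
      (∫ x, (lap f x) ^ 2) - α * ∫ x, (f x) ^ 2 ≤ 1 →
      (∫ x in Ω, Real.exp (32 * π ^ 2 * (f x) ^ 2)) ≤ C) :
    ∀ (k : ℕ) (a : ℕ → ℝ), 1 ≤ k →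
      (∀ j, 1 ≤ j → j ≤ k → 0 ≤ a j) → a 1 < lam1 Ω →
      (∀ j, 1 ≤ j → j + 1 ≤ k → a (j + 1) ≤ lam1 Ω * a j) →
      ∃ C : ℝ, ∀ f : E4 → ℝ, Adm Ω f → (∫ x, (lap f x) ^ 2) ≤ 1 →
        (∫ x in Ω, Real.exp (32 * π ^ 2 *
          (1 + ∑ j ∈ Finset.range k, a (j + 1) * (∫ y, (f y) ^ 2) ^ (j + 1)) *
          (f x) ^ 2)) ≤ C := by
  intro k a hk ha ha1 hrec
  obtain ⟨α, hα0, hαL, hq⟩ := exists_lt_forall_mul_one_sub_mul_le (ha 1 le_rfl hk) ha1 hrec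
  obtain ⟨C, hC⟩ := H α hα0 hαL
  refine ⟨C, fun f hf hΔ => ?_⟩
  have ht : 0 ≤ ∫ y, (f y) ^ 2 := integral_nonneg fun y => sq_nonneg _
  have hq0 : 0 ≤ 1 + ∑ j ∈ Finset.range k, a (j + 1) * (∫ y, (f y) ^ 2) ^ (j + 1) :=
    add_nonneg zero_le_one <| Finset.sum_nonneg fun j hj =>
      mul_nonneg (ha _ (by omega) (Finset.mem_range.mp hj)) (pow_nonneg ht _)
  refine setIntegral_exp_mul_sq_le_of_rescaled hC hf hq0 ?_
  calc _ ≤ (1 + ∑ j ∈ Finset.range k, a (j + 1) * (∫ y, (f y) ^ 2) ^ (j + 1)) *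
        (1 - α * ∫ y, (f y) ^ 2) := by gcongr
    _ ≤ 1 := hq _ ht ((lam1_mul_integral_sq_le Ω hf).trans hΔ)

/-- Proposition 1.2: the Tintarev-type Adams inequality
(finiteness of `sup ∫_Ω e^{32π²u²}` over `‖Δu‖₂² − α‖u‖₂² ≤ 1`, for every
`α ∈ [0, λ₁(Ω))`) implies the Adimurthi–Druet/Lu–Yang type Adams inequality
(finiteness of `sup ∫_Ω e^{32π² q(‖u‖₂²)u²}` over `‖Δu‖₂ ≤ 1`). -/
theorem stmt4 (Ω : Set E4) (hΩo : IsOpen Ω) (hΩne : Ω.Nonempty)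
    (hΩb : Bornology.IsBounded Ω)
    (H : ∀ α : ℝ, 0 ≤ α → α < lam1 Ω → ∃ C : ℝ, ∀ f : E4 → ℝ, Adm Ω f →
      (∫ x, (lap f x) ^ 2) - α * ∫ x, (f x) ^ 2 ≤ 1 →
      (∫ x in Ω, Real.exp (32 * π ^ 2 * (f x) ^ 2)) ≤ C) :
    ∀ (k : ℕ) (a : ℕ → ℝ), 1 ≤ k →
      (∀ j, 1 ≤ j → j ≤ k → 0 ≤ a j) → a 1 < lam1 Ω →
      (∀ j, 1 ≤ j → j + 1 ≤ k → a (j + 1) ≤ lam1 Ω * a j) →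
      ∃ C : ℝ, ∀ f : E4 → ℝ, Adm Ω f → (∫ x, (lap f x) ^ 2) ≤ 1 →
        (∫ x in Ω, Real.exp (32 * π ^ 2 *
          (1 + ∑ j ∈ Finset.range k, a (j + 1) * (∫ y, (f y) ^ 2) ^ (j + 1)) *
          (f x) ^ 2)) ≤ C :=
  stmt4_general Ω H
end
end

section
/- Let φ(x) = (1/(16π²)) ln(1/(1 + (π/√6)|x|²)) on ℝ⁴. Then ∫_{B_R(0)} |Δφ|² dx = (1/(16π²)) ln(1 + (π/√6) R²) + 1/(96π²) + O(R^{−2}) as R → ∞; equivalently, ∫_{B_R(0)} |Δφ|² dx = (1/(8π²)) ln R + (1/(16π²)) ln(π/√6) + 1/(96π²) + O(R^{−2}). -/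
open MeasureTheory Real Filter Set

noncomputable section

/-!
Write `φ(y) = g(‖y‖²)` with `g(s) = c log (1 / (1 + a s))`. For a function of `‖y‖²` on `ℝ⁴`,
`Δφ = 8 g'(s) + 4 s g''(s)`, which gives `Δφ(x) = -4ac (2 + a r²) / (1 + a r²)²` at `r = ‖x‖`.
Since `|B₁| = π²/2` in `ℝ⁴`, polar coordinates give `∫_{B_R} |Δφ|² = 2π² ∫₀ᴿ r³ |Δφ|² dr`, and
in the variable `u = 1 + a r²` the radial integrand has the explicit primitive
`8c² (log u - u⁻¹ + u⁻²/2 + u⁻³/3)`. Hence the energy is `16π²c² (log U + 1/6 + O(U⁻¹))` with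
`U = 1 + a R²`, and `16π²c² = c` for `c = 1/(16π²)`.
-/

lemma hasFDerivAt_comp_norm_sq {E : Type*} [NormedAddCommGroup E] [InnerProductSpace ℝ E]
    {g : ℝ → ℝ} {g' : ℝ} {y : E} (hg : HasDerivAt g g' (‖y‖ ^ 2)) :
    HasFDerivAt (fun z : E => g (‖z‖ ^ 2)) ((2 * g') • innerSL ℝ y) y :=
  (hg.comp_hasFDerivAt y (hasStrictFDerivAt_norm_sq y).hasFDerivAt).congr_fderiv <| by
    ext v; simp; ring

lemma lap_comp_norm_sq {g g' g'' : ℝ → ℝ} (x : E4)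
    (hg : ∀ y : E4, HasDerivAt g (g' (‖y‖ ^ 2)) (‖y‖ ^ 2))
    (hg' : HasDerivAt g' (g'' (‖x‖ ^ 2)) (‖x‖ ^ 2)) :
    lap (fun y => g (‖y‖ ^ 2)) x = 8 * g' (‖x‖ ^ 2) + 4 * ‖x‖ ^ 2 * g'' (‖x‖ ^ 2) := by
  have hfirst : ∀ i : Fin 4, (fun y => fderiv ℝ (fun z : E4 => g (‖z‖ ^ 2)) y
      (EuclideanSpace.single i 1)) = fun y => 2 * g' (‖y‖ ^ 2) * y i := by
    intro i; funext y
    rw [(hasFDerivAt_comp_norm_sq (hg y)).fderiv]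
    simp [EuclideanSpace.inner_single_right]
  have hsecond : ∀ i : Fin 4, HasFDerivAt (fun y : E4 => 2 * g' (‖y‖ ^ 2) * y i)
      ((2 * g' (‖x‖ ^ 2)) • EuclideanSpace.proj i + (4 * g'' (‖x‖ ^ 2) * x i) • innerSL ℝ x) x := by
    intro i
    exact (((hasFDerivAt_comp_norm_sq hg').const_mul 2).mul
      (EuclideanSpace.proj i : E4 →L[ℝ] ℝ).hasFDerivAt).congr_fderiv (by ext v; simp; ring)
  have hnorm : ∑ i : Fin 4, x i ^ 2 = ‖x‖ ^ 2 := by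
    rw [EuclideanSpace.norm_sq_eq]; simp
  simp only [lap, hfirst, (hsecond _).fderiv]
  simp only [add_apply, smul_apply, PiLp.proj_apply, PiLp.single_eq_same, smul_eq_mul, mul_one,
    coe_innerSL_apply, EuclideanSpace.inner_single_right, ringHom_apply, one_mul]
  rw [← hnorm, Fin.sum_univ_four, Fin.sum_univ_four]
  ring

lemma lap_log_inv_one_add_mul_norm_sq {a : ℝ} (ha : 0 ≤ a) (c : ℝ) (x : E4) :
    lap (fun y => c * Real.log (1 / (1 + a * ‖y‖ ^ 2))) x
      = -4 * a * c * (2 + a * ‖x‖ ^ 2) / (1 + a * ‖x‖ ^ 2) ^ 2 := by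
  have hpos : ∀ y : E4, 0 < 1 + a * ‖y‖ ^ 2 := fun y => by positivity
  have hlin : ∀ s : ℝ, HasDerivAt (fun s => 1 + a * s) a s := fun s => by
    simpa using ((hasDerivAt_id s).const_mul a).const_add 1
  have hg : ∀ s, 0 < 1 + a * s →
      HasDerivAt (fun s => c * Real.log (1 / (1 + a * s))) (-(a * c) / (1 + a * s)) s := by
    intro s hs
    have hlog : (fun s => c * Real.log (1 / (1 + a * s))) = fun s => -c * Real.log (1 + a * s) := by
      funext s; rw [one_div, Real.log_inv]; ring
    rw [hlog]
    exact (((hlin s).log hs.ne').const_mul (-c)).congr_deriv (by ring)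
  have hg' : ∀ s, 0 < 1 + a * s →
      HasDerivAt (fun s => -(a * c) / (1 + a * s)) (a ^ 2 * c / (1 + a * s) ^ 2) s := by
    intro s hs
    simp only [div_eq_mul_inv]
    refine ((hlin s).inv hs.ne').const_mul (-(a * c)) |>.congr_deriv ?_
    ring
  refine (lap_comp_norm_sq (g' := fun s => -(a * c) / (1 + a * s))
    (g'' := fun s => a ^ 2 * c / (1 + a * s) ^ 2) x (fun y => hg _ (hpos y))
    (hg' _ (hpos x))).trans ?_
  field_simp
  ring

lemma setIntegral_ball_comp_norm (f : ℝ → ℝ) (R : ℝ) :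
    ∫ x in Metric.ball (0 : E4) R, f ‖x‖ = 2 * π ^ 2 * ∫ r in Ioo 0 R, r ^ 3 * f r := by
  have hfinrank : Module.finrank ℝ E4 = 4 := by simp
  have hvol : volume.real (Metric.ball (0 : E4) 1) = π ^ 2 / 2 := by
    rw [Measure.real, InnerProductSpace.volume_ball_of_dim_even (k := 2) (by simp),
      ENNReal.ofReal_one, one_pow, one_mul, ENNReal.toReal_ofReal (by positivity)]
    norm_num [Nat.factorial]
  have hball : Metric.ball (0 : E4) R = (‖·‖) ⁻¹' Iio R := by
    ext x; simp
  have hradial : ∫ x in Metric.ball (0 : E4) R, f ‖x‖ = ∫ x : E4, (Iio R).indicator f ‖x‖ := by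
    rw [← integral_indicator measurableSet_ball, hball]
    exact integral_congr_ae (.of_forall fun x => Set.indicator_comp_right (g := f) _)
  rw [hradial, integral_fun_norm_addHaar volume ((Iio R).indicator f), hfinrank, hvol,
    ← Ioi_inter_Iio, ← setIntegral_indicator measurableSet_Iio]
  simp only [smul_eq_mul, nsmul_eq_mul, Set.indicator_mul_right]
  norm_num
  ring

def energyPrimitive (u : ℝ) : ℝ := Real.log u - u⁻¹ + u⁻¹ ^ 2 / 2 + u⁻¹ ^ 3 / 3

lemma energyPrimitive_one : energyPrimitive 1 = -1 / 6 := by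
  norm_num [energyPrimitive]

lemma hasDerivAt_energyPrimitive {u : ℝ} (hu : u ≠ 0) :
    HasDerivAt energyPrimitive ((u + 1) ^ 2 * (u - 1) / u ^ 4) u := by
  have hinv := hasDerivAt_inv hu
  refine ((((Real.hasDerivAt_log hu).sub hinv).add ((hinv.pow 2).div_const 2)).add
    ((hinv.pow 3).div_const 3)).congr_deriv ?_
  norm_num
  field_simp
  ring

lemma abs_energyPrimitive_sub_log_le {u : ℝ} (hu : 1 ≤ u) :
    |energyPrimitive u - Real.log u| ≤ u⁻¹ := by
  have hv : 0 < u⁻¹ := by positivity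
  have hv1 : u⁻¹ ≤ 1 := inv_le_one_of_one_le₀ hu
  rw [energyPrimitive, abs_le]
  constructor <;> nlinarith [mul_pos hv hv]

lemma log_one_add_sub_log_le {t : ℝ} (ht : 0 < t) :
    0 ≤ Real.log (1 + t) - Real.log t ∧ Real.log (1 + t) - Real.log t ≤ t⁻¹ := by
  rw [← Real.log_div (by positivity) ht.ne', add_div, div_self ht.ne', ← inv_eq_one_div]
  exact ⟨Real.log_nonneg (by linarith [inv_pos.2 ht]),
    by linarith [Real.log_le_sub_one_of_pos (by positivity : 0 < t⁻¹ + 1)]⟩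

lemma integral_Ioo_pow_three_mul_sq_lap_bubble {a : ℝ} (ha : 0 ≤ a) (c : ℝ) {R : ℝ} (hR : 0 ≤ R) :
    ∫ r in Ioo 0 R, r ^ 3 * (-4 * a * c * (2 + a * r ^ 2) / (1 + a * r ^ 2) ^ 2) ^ 2
      = 8 * c ^ 2 * (energyPrimitive (1 + a * R ^ 2) - energyPrimitive 1) := by
  have hpos : ∀ r : ℝ, 0 < 1 + a * r ^ 2 := fun r => by positivity
  have hderiv : ∀ r : ℝ, HasDerivAt (fun r => 8 * c ^ 2 * energyPrimitive (1 + a * r ^ 2))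
      (r ^ 3 * (-4 * a * c * (2 + a * r ^ 2) / (1 + a * r ^ 2) ^ 2) ^ 2) r := by
    intro r
    have hsq : HasDerivAt (fun r => 1 + a * r ^ 2) (a * (2 * r)) r := by
      simpa using ((hasDerivAt_pow 2 r).const_mul a).const_add 1
    refine (((hasDerivAt_energyPrimitive (hpos r).ne').comp r hsq).const_mul _).congr_deriv ?_
    have := (hpos r).ne'
    field_simp
    ring
  have hcont : Continuous fun r : ℝ =>
      r ^ 3 * (-4 * a * c * (2 + a * r ^ 2) / (1 + a * r ^ 2) ^ 2) ^ 2 := by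
    fun_prop (disch := exact fun r => (pow_pos (hpos r) 2).ne')
  rw [← integral_Ioc_eq_integral_Ioo, ← intervalIntegral.integral_of_le hR,
    intervalIntegral.integral_eq_sub_of_hasDerivAt (fun r _ => hderiv r)
      (hcont.intervalIntegrable 0 R)]
  simp only [ne_eq, OfNat.ofNat_ne_zero, not_false_eq_true, zero_pow, mul_zero, add_zero]
  ring

lemma integral_ball_sq_lap_bubble {a : ℝ} (ha : 0 ≤ a) (c : ℝ) {R : ℝ} (hR : 0 ≤ R) :
    ∫ x in Metric.ball (0 : E4) R, (lap (fun y => c * Real.log (1 / (1 + a * ‖y‖ ^ 2))) x) ^ 2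
      = 16 * π ^ 2 * c ^ 2 * (energyPrimitive (1 + a * R ^ 2) + 1 / 6) := by
  simp_rw [lap_log_inv_one_add_mul_norm_sq ha c]
  rw [setIntegral_ball_comp_norm
      (fun r => (-4 * a * c * (2 + a * r ^ 2) / (1 + a * r ^ 2) ^ 2) ^ 2),
    integral_Ioo_pow_three_mul_sq_lap_bubble ha c hR, energyPrimitive_one]
  ring

lemma abs_integral_sq_lap_bubble_sub_log_le {a : ℝ} (ha : 0 < a) (c : ℝ) {R : ℝ} (hR : 0 < R) :
    |(∫ x in Metric.ball (0 : E4) R, (lap (fun y => c * Real.log (1 / (1 + a * ‖y‖ ^ 2))) x) ^ 2)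
        - 16 * π ^ 2 * c ^ 2 * (Real.log (1 + a * R ^ 2) + 1 / 6)|
      ≤ 16 * π ^ 2 * c ^ 2 / (a * R ^ 2) := by
  have haR : 0 < a * R ^ 2 := by positivity
  rw [integral_ball_sq_lap_bubble ha.le c hR.le]
  calc _ = 16 * π ^ 2 * c ^ 2 *
        |energyPrimitive (1 + a * R ^ 2) - Real.log (1 + a * R ^ 2)| := by
        rw [← mul_sub, abs_mul, abs_of_nonneg (by positivity)]
        ring_nf
    _ ≤ 16 * π ^ 2 * c ^ 2 * (1 + a * R ^ 2)⁻¹ := by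
        gcongr; exact abs_energyPrimitive_sub_log_le (by linarith)
    _ ≤ 16 * π ^ 2 * c ^ 2 * (a * R ^ 2)⁻¹ := by
        gcongr; linarith
    _ = 16 * π ^ 2 * c ^ 2 / (a * R ^ 2) := by ring

lemma abs_integral_sq_lap_bubble_sub_log_radius_le {a : ℝ} (ha : 0 < a) (c : ℝ) {R : ℝ}
    (hR : 0 < R) :
    |(∫ x in Metric.ball (0 : E4) R, (lap (fun y => c * Real.log (1 / (1 + a * ‖y‖ ^ 2))) x) ^ 2)
        - 16 * π ^ 2 * c ^ 2 * (Real.log a + 2 * Real.log R + 1 / 6)|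
      ≤ 2 * (16 * π ^ 2 * c ^ 2) / (a * R ^ 2) := by
  have haR : 0 < a * R ^ 2 := by positivity
  have hlog : Real.log (a * R ^ 2) = Real.log a + 2 * Real.log R := by
    rw [Real.log_mul ha.ne' (by positivity), Real.log_pow]; push_cast; ring
  obtain ⟨hlog_nonneg, hlog_le⟩ := log_one_add_sub_log_le haR
  calc _ ≤ |(∫ x in Metric.ball (0 : E4) R,
            (lap (fun y => c * Real.log (1 / (1 + a * ‖y‖ ^ 2))) x) ^ 2)
          - 16 * π ^ 2 * c ^ 2 * (Real.log (1 + a * R ^ 2) + 1 / 6)|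
        + 16 * π ^ 2 * c ^ 2 * (Real.log (1 + a * R ^ 2) - Real.log (a * R ^ 2)) := by
        rw [← abs_of_nonneg (mul_nonneg (by positivity) hlog_nonneg :
          0 ≤ 16 * π ^ 2 * c ^ 2 * (Real.log (1 + a * R ^ 2) - Real.log (a * R ^ 2))), ← hlog]
        exact (abs_add_le _ _).trans_eq' (by ring_nf)
    _ ≤ 16 * π ^ 2 * c ^ 2 / (a * R ^ 2) + 16 * π ^ 2 * c ^ 2 * (a * R ^ 2)⁻¹ := by
        gcongr
        exact abs_integral_sq_lap_bubble_sub_log_le ha c hR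
    _ = 2 * (16 * π ^ 2 * c ^ 2) / (a * R ^ 2) := by ring

/-- for the standard bubble
`φ(x) = (1/(16π²)) ln(1/(1 + (π/√6)|x|²))` on `ℝ⁴`, as `R → ∞`,
`∫_{B_R(0)} |Δφ|² dx = (1/(16π²)) ln(1 + (π/√6)R²) + 1/(96π²) + O(R⁻²)`;
equivalently it equals
`(1/(8π²)) ln R + (1/(16π²)) ln(π/√6) + 1/(96π²) + O(R⁻²)`. -/
theorem stmt16 :
    ∃ C : ℝ, ∀ R : ℝ, 1 ≤ R →
      |(∫ x in Metric.ball (0 : E4) R,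
          (lap (fun y : E4 =>
            (1 / (16 * π ^ 2)) *
              Real.log (1 / (1 + (π / Real.sqrt 6) * ‖y‖ ^ 2))) x) ^ 2) -
        ((1 / (16 * π ^ 2)) * Real.log (1 + (π / Real.sqrt 6) * R ^ 2) +
          1 / (96 * π ^ 2))| ≤ C / R ^ 2 ∧
      |(∫ x in Metric.ball (0 : E4) R,
          (lap (fun y : E4 =>
            (1 / (16 * π ^ 2)) *
              Real.log (1 / (1 + (π / Real.sqrt 6) * ‖y‖ ^ 2))) x) ^ 2) -
        ((1 / (8 * π ^ 2)) * Real.log R +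
          (1 / (16 * π ^ 2)) * Real.log (π / Real.sqrt 6) +
          1 / (96 * π ^ 2))| ≤ C / R ^ 2 := by
  set a := π / Real.sqrt 6
  set c := 1 / (16 * π ^ 2) with hc
  have ha : 0 < a := by positivity
  have hK : 16 * π ^ 2 * c ^ 2 = c := by rw [hc]; field_simp
  have hc6 : 1 / (96 * π ^ 2) = c * (1 / 6) := by rw [hc]; ring
  have hc8 : 1 / (8 * π ^ 2) = c * 2 := by rw [hc]; ring
  refine ⟨2 * c / a, fun R hR => ?_⟩
  have hR0 : 0 < R := by linarith
  have h1 := abs_integral_sq_lap_bubble_sub_log_le ha c hR0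
  have h2 := abs_integral_sq_lap_bubble_sub_log_radius_le ha c hR0
  rw [hK] at h1 h2
  constructor
  · rw [hc6, ← mul_add]
    have hc0 : 0 < c := by rw [hc]; positivity
    calc _ ≤ c / (a * R ^ 2) := h1
      _ ≤ 2 * c / (a * R ^ 2) := by gcongr; linarith
      _ = 2 * c / a / R ^ 2 := by rw [div_div]
  · rw [hc6, hc8, show c * 2 * Real.log R + c * Real.log a + c * (1 / 6)
      = c * (Real.log a + 2 * Real.log R + 1 / 6) by ring]
    exact h2.trans_eq (by ring)
end
end

section
/- Suppose u ∈ C⁴(closure of Ω′) solves Δ²u = f(u) on a smooth bounded domain Ω′ ⊂ ℝ⁴, let F(u) = ∫₀^u f(s) ds and v = −Δu. Then for any y ∈ ℝ⁴: 4∫_{Ω′} F(u) dx = ∫_{∂Ω′} ⟨x−y, ν⟩ F(u) dω + (1/2)∫_{∂Ω′} v² ⟨x−y, ν⟩ dω + 2∫_{∂Ω′} (∂u/∂ν) v dω + ∫_{∂Ω′} ( (∂v/∂ν)⟨x−y, ∇u⟩ + (∂u/∂ν)⟨x−y, ∇v⟩ − ⟨∇u, ∇v⟩⟨x−y, ν⟩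 ) dω, where ν is the outward unit normal on ∂Ω′. -/
/-!
Apply the divergence theorem to the Pohozaev vector field
`G = (F(u) + v²/2 - ⟨∇u, ∇v⟩)(x - y) + (2v + ⟨x - y, ∇v⟩)∇u + ⟨x - y, ∇u⟩∇v`, whose normal
component is the boundary integrand. By the product rule and the symmetry of second derivatives,
`div G = 4F(u) + (2v + ⟨x - y, ∇v⟩)(v + Δu) + ⟨x - y, ∇u⟩(f(u) + Δv)`: the terms in `v²` and
`⟨∇u, ∇v⟩` cancel exactly because `div (x - y) = 4` is the dimension. For `v = -Δu` and
`Δv = -Δ²u = -f(u)` only `4F(u)` survives.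
-/

open MeasureTheory Real Filter Set

noncomputable section

/-- Divergence of a vector field on `ℝ⁴`. -/
def divg (F : E4 → E4) (x : E4) : ℝ :=
  ∑ i : Fin 4, fderiv ℝ F x (EuclideanSpace.single i 1) i


open InnerProductSpace
open scoped Gradient RealInnerProductSpace

section Divergence

variable {c : E4 → ℝ} {F G : E4 → E4} {x : E4}

lemma divg_add (hF : DifferentiableAt ℝ F x) (hG : DifferentiableAt ℝ G x) :
    divg (fun z => F z + G z) x = divg F x + divg G x := by
  simp [divg, fderiv_fun_add hF hG, Finset.sum_add_distrib]

lemma divg_smul (hc : DifferentiableAt ℝ c x) (hF : DifferentiableAt ℝ F x) :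
    divg (fun z => c z • F z) x = c x * divg F x + fderiv ℝ c x (F x) := by
  have hsum : ∑ i : Fin 4, F x i • EuclideanSpace.single i (1 : ℝ) = F x := by
    simpa using (EuclideanSpace.basisFun (Fin 4) ℝ).toBasis.sum_repr (F x)
  simp only [divg, fderiv_fun_smul hc hF, add_apply, smul_apply,
    ContinuousLinearMap.smulRight_apply, PiLp.add_apply, PiLp.smul_apply, smul_eq_mul,
    Finset.sum_add_distrib, Finset.mul_sum, add_right_inj]
  conv_rhs => rw [← hsum, map_sum]
  simp [mul_comm]

lemma divg_sub_const (y : E4) : divg (fun z => z - y) x = 4 := by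
  simp [divg, fderiv_sub_const]

end Divergence

section SecondDerivative

variable {E : Type*} [NormedAddCommGroup E] [NormedSpace ℝ E] {g : E → ℝ} {x : E}

lemma fderiv_fderiv_apply (hg : ContDiff ℝ 2 g) (a b : E) :
    fderiv ℝ (fun z => fderiv ℝ g z b) x a = fderiv ℝ (fderiv ℝ g) x a b := by
  have hdg : DifferentiableAt ℝ (fderiv ℝ g) x :=
    (hg.fderiv_right (m := 1) le_rfl).differentiable one_ne_zero x
  simp [fderiv_clm_apply hdg (differentiableAt_const b)]

lemma fderiv_fderiv_comm (hg : ContDiff ℝ 2 g) (a b : E) :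
    fderiv ℝ (fderiv ℝ g) x a b = fderiv ℝ (fderiv ℝ g) x b a :=
  hg.contDiffAt.isSymmSndFDerivAt (by simp) a b

end SecondDerivative

section Gradient

variable {E : Type*} [NormedAddCommGroup E] [InnerProductSpace ℝ E] [CompleteSpace E]
  {g u v : E → ℝ} {x y : E}

lemma contDiff_gradient {n : WithTop ℕ∞} (hg : ContDiff ℝ (n + 1) g) :
    ContDiff ℝ n (∇ g) :=
  (toDual ℝ E).symm.toContinuousLinearEquiv.contDiff.comp (hg.fderiv_right le_rfl)

lemma differentiable_gradient (hg : ContDiff ℝ 2 g) : Differentiable ℝ (∇ g) :=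
  (contDiff_gradient (n := 1) hg).differentiable one_ne_zero

lemma inner_fderiv_gradient (a b : E) :
    ⟪fderiv ℝ (∇ g) x a, b⟫ = fderiv ℝ (fderiv ℝ g) x a b := by
  have : ∇ g = (toDual ℝ E).symm ∘ fderiv ℝ g := rfl
  rw [this, LinearIsometryEquiv.comp_fderiv]
  exact toDual_symm_apply

lemma fderiv_inner_gradient_gradient (hu : ContDiff ℝ 2 u) (hv : ContDiff ℝ 2 v) (w : E) :
    fderiv ℝ (fun z => ⟪∇ u z, ∇ v z⟫) x w
      = fderiv ℝ (fderiv ℝ u) x w (∇ v x) + fderiv ℝ (fderiv ℝ v) x w (∇ u x) := by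
  rw [fderiv_inner_apply ℝ (differentiable_gradient hu x) (differentiable_gradient hv x),
    inner_fderiv_gradient, real_inner_comm, inner_fderiv_gradient, add_comm]

lemma fderiv_inner_sub_gradient (hg : ContDiff ℝ 2 g) (w : E) :
    fderiv ℝ (fun z => ⟪z - y, ∇ g z⟫) x w
      = ⟪w, ∇ g x⟫ + fderiv ℝ (fderiv ℝ g) x w (x - y) := by
  rw [fderiv_inner_apply ℝ (by fun_prop) (differentiable_gradient hg x), fderiv_sub_const,
    fderiv_fun_id, ContinuousLinearMap.id_apply, real_inner_comm _ (x - y), inner_fderiv_gradient,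
    add_comm]

end Gradient

section Laplacian

variable {g : E4 → ℝ} {x : E4}

lemma divg_gradient (hg : ContDiff ℝ 2 g) : divg (∇ g) x = lap g x := by
  simp only [divg, lap, fderiv_fderiv_apply hg, ← inner_fderiv_gradient,
    EuclideanSpace.inner_single_right]
  simp

lemma contDiff_lap {n : WithTop ℕ∞} (hg : ContDiff ℝ (n + 2) g) : ContDiff ℝ n (lap g) := by
  have hdg : ContDiff ℝ (n + 1) (fderiv ℝ g) := hg.fderiv_right (by simp [add_assoc]; norm_num)
  exact ContDiff.sum fun i _ =>
    ((hdg.clm_apply contDiff_const).fderiv_right le_rfl).clm_apply contDiff_const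

lemma lap_neg : lap (fun z => -g z) x = -lap g x := by
  simp [lap, fderiv_fun_neg]

end Laplacian

section PohozaevField

variable {E : Type*} [NormedAddCommGroup E] [InnerProductSpace ℝ E] [CompleteSpace E]
  {Φ u v : E → ℝ} {y : E}

def pohozaevField (Φ u v : E → ℝ) (y z : E) : E :=
  (Φ z + v z ^ 2 / 2 - ⟪∇ u z, ∇ v z⟫) • (z - y)
    + (2 * v z + ⟪z - y, ∇ v z⟫) • ∇ u z + ⟪z - y, ∇ u z⟫ • ∇ v z

lemma contDiff_pohozaevField (hΦ : ContDiff ℝ 1 Φ) (hu : ContDiff ℝ 2 u) (hv : ContDiff ℝ 2 v) :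
    ContDiff ℝ 1 (pohozaevField Φ u v y) := by
  have hdu := contDiff_gradient (n := 1) hu
  have hdv := contDiff_gradient (n := 1) hv
  have hid : ContDiff ℝ 1 (fun z : E => z - y) := by fun_prop
  have hv' : ContDiff ℝ 1 v := hv.of_le one_le_two
  exact (((hΦ.add (by fun_prop)).sub (hdu.inner ℝ hdv)).smul hid).add
    (((hv'.const_smul (2 : ℝ)).add (hid.inner ℝ hdv)).smul hdu) |>.add
    ((hid.inner ℝ hdu).smul hdv)

lemma inner_pohozaevField (x n : E) :
    ⟪pohozaevField Φ u v y x, n⟫ = ⟪x - y, n⟫ * Φ x + 1 / 2 * (v x ^ 2 * ⟪x - y, n⟫)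
      + 2 * (⟪∇ u x, n⟫ * v x) + (⟪∇ v x, n⟫ * ⟪x - y, ∇ u x⟫ + ⟪∇ u x, n⟫ * ⟪x - y, ∇ v x⟫
        - ⟪∇ u x, ∇ v x⟫ * ⟪x - y, n⟫) := by
  simp only [pohozaevField, inner_add_left, real_inner_smul_left]
  ring

end PohozaevField

lemma divg_pohozaevField {Φ u v : E4 → ℝ} {x y : E4} (hΦ : DifferentiableAt ℝ Φ x)
    (hu : ContDiff ℝ 2 u) (hv : ContDiff ℝ 2 v) :
    divg (pohozaevField Φ u v y) x = 4 * Φ x + fderiv ℝ Φ x (x - y)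
      + (2 * v x + ⟪x - y, ∇ v x⟫) * (v x + lap u x) + ⟪x - y, ∇ u x⟫ * lap v x := by
  have hdu := differentiable_gradient hu
  have hdv := differentiable_gradient hv
  have hv' : Differentiable ℝ v := hv.differentiable two_ne_zero
  have hid : DifferentiableAt ℝ (fun z : E4 => z - y) x := by fun_prop
  have hsq : HasFDerivAt (fun z => v z ^ 2 / 2) (v x • fderiv ℝ v x) x := by
    have hhalf : HasDerivAt (fun t : ℝ => t ^ 2 / 2) (v x) (v x) := by
      simpa using (hasDerivAt_pow 2 (v x)).div_const 2
    exact hhalf.comp_hasFDerivAt x (hv' x).hasFDerivAt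
  have htwice : DifferentiableAt ℝ (fun z => 2 * v z) x := by fun_prop
  have huv : DifferentiableAt ℝ (fun z => ⟪∇ u z, ∇ v z⟫) x := (hdu x).inner ℝ (hdv x)
  have hyv : DifferentiableAt ℝ (fun z => ⟪z - y, ∇ v z⟫) x := hid.inner ℝ (hdv x)
  have hyu : DifferentiableAt ℝ (fun z => ⟪z - y, ∇ u z⟫) x := hid.inner ℝ (hdu x)
  unfold pohozaevField
  rw [divg_add (by fun_prop) (by fun_prop), divg_add (by fun_prop) (by fun_prop),
    divg_smul ((hΦ.fun_add hsq.differentiableAt).fun_sub huv) hid,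
    divg_smul (htwice.fun_add hyv) (hdu x), divg_smul hyu (hdv x), divg_sub_const,
    divg_gradient hu, divg_gradient hv, fderiv_fun_sub (hΦ.fun_add hsq.differentiableAt) huv,
    fderiv_fun_add hΦ hsq.differentiableAt, fderiv_fun_add htwice hyv, sub_apply, add_apply,
    add_apply, fderiv_inner_gradient_gradient hu hv, fderiv_inner_sub_gradient hu,
    fderiv_inner_sub_gradient hv, hsq.fderiv, fderiv_const_mul (hv' x)]
  simp only [smul_apply, smul_eq_mul, ← inner_gradient_left, fderiv_fderiv_comm hu (∇ v x),
    fderiv_fderiv_comm hv (∇ u x), real_inner_comm (∇ u x), real_inner_comm (∇ v x) (x - y)]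
  ring

lemma divg_pohozaevField_of_lap_lap_eq {u : E4 → ℝ} {f : ℝ → ℝ} {x y : E4}
    (hu : ContDiff ℝ 4 u) (hf : Continuous f) (hx : lap (lap u) x = f (u x)) :
    divg (pohozaevField (fun z => ∫ s in (0:ℝ)..(u z), f s) u (fun z => -lap u z) y) x
      = 4 * ∫ s in (0:ℝ)..(u x), f s := by
  have hu₂ : ContDiff ℝ 2 u := hu.of_le (by norm_num)
  have hΦ : HasFDerivAt (fun z => ∫ s in (0:ℝ)..(u z), f s) (f (u x) • fderiv ℝ u x) x :=
    (hf.integral_hasStrictDerivAt 0 (u x)).hasDerivAt.comp_hasFDerivAt x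
      ((hu₂.differentiable two_ne_zero) x).hasFDerivAt
  rw [divg_pohozaevField hΦ.differentiableAt hu₂ (contDiff_lap (n := 2) hu).neg, hΦ.fderiv,
    lap_neg, hx]
  simp only [neg_add_cancel, mul_zero, add_zero, smul_apply, smul_eq_mul,
    real_inner_comm (∇ u x), inner_gradient_left]
  ring

lemma contDiff_one_intervalIntegral {f : ℝ → ℝ} (hf : Continuous f) (a : ℝ) :
    ContDiff ℝ 1 (fun r => ∫ s in a..r, f s) := by
  refine contDiff_one_iff_deriv.2 ⟨fun r =>
    (hf.integral_hasStrictDerivAt a r).hasDerivAt.differentiableAt, ?_⟩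
  rwa [funext (hf.deriv_integral f a)]

lemma Continuous.integrable_of_measure_compl_eq_zero {X : Type*} [TopologicalSpace X]
    [T2Space X] [MeasurableSpace X] [OpensMeasurableSpace X] {μ : Measure X}
    [IsFiniteMeasureOnCompacts μ] {K : Set X} (hK : IsCompact K) (hμK : μ Kᶜ = 0)
    {g : X → ℝ} (hg : Continuous g) : Integrable g μ := by
  rw [← Measure.restrict_eq_self_of_ae_mem (mem_ae_iff.2 hμK)]
  exact hg.continuousOn.integrableOn_compact hK

theorem stmt18_general (Ω' : Set E4) (hΩo : IsOpen Ω') (hΩb : Bornology.IsBounded Ω')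
    (μ : Measure E4) [IsFiniteMeasure μ] (hμfr : μ (frontier Ω')ᶜ = 0)
    (ν : E4 → E4) (hν : Continuous ν)
    (hdiv : ∀ F : E4 → E4, ContDiff ℝ 1 F →
      (∫ x in Ω', divg F x) = ∫ x, (inner ℝ (F x) (ν x) : ℝ) ∂μ)
    (u : E4 → ℝ) (hu : ContDiff ℝ 4 u) (f : ℝ → ℝ) (hf : Continuous f)
    (heq : ∀ x ∈ Ω', lap (lap u) x = f (u x)) (y : E4) :
    4 * (∫ x in Ω', (∫ s in (0:ℝ)..(u x), f s)) =
      (∫ x, (inner ℝ (x - y) (ν x) : ℝ) * (∫ s in (0:ℝ)..(u x), f s) ∂μ)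
      + (1 / 2) * (∫ x, (-(lap u x)) ^ 2 * (inner ℝ (x - y) (ν x) : ℝ) ∂μ)
      + 2 * (∫ x, (inner ℝ (gradient u x) (ν x) : ℝ) * (-(lap u x)) ∂μ)
      + ∫ x,
          ((inner ℝ (gradient (fun z => -(lap u z)) x) (ν x) : ℝ) *
              (inner ℝ (x - y) (gradient u x) : ℝ)
            + (inner ℝ (gradient u x) (ν x) : ℝ) *
              (inner ℝ (x - y) (gradient (fun z => -(lap u z)) x) : ℝ)
            - (inner ℝ (gradient u x) (gradient (fun z => -(lap u z)) x) : ℝ) *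
              (inner ℝ (x - y) (ν x) : ℝ)) ∂μ := by
  set Φ : E4 → ℝ := fun z => ∫ s in (0:ℝ)..(u z), f s
  set v : E4 → ℝ := fun z => -lap u z
  have hu₂ : ContDiff ℝ 2 u := hu.of_le (by norm_num)
  have hv : ContDiff ℝ 2 v := (contDiff_lap (n := 2) hu).neg
  have hΦ : ContDiff ℝ 1 Φ := (contDiff_one_intervalIntegral hf 0).comp (hu₂.of_le one_le_two)
  have hintegrable : ∀ g : E4 → ℝ, Continuous g → Integrable g μ := fun g hg =>
    hg.integrable_of_measure_compl_eq_zero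
      (hΩb.isCompact_closure.of_isClosed_subset isClosed_frontier frontier_subset_closure) hμfr
  have hcu := (contDiff_gradient (n := 1) hu₂).continuous
  have hcv := (contDiff_gradient (n := 1) hv).continuous
  calc 4 * ∫ x in Ω', Φ x = ∫ x in Ω', divg (pohozaevField Φ u v y) x := by
        rw [setIntegral_congr_fun hΩo.measurableSet
          (fun x hx => divg_pohozaevField_of_lap_lap_eq hu hf (heq x hx)), integral_const_mul]
    _ = ∫ x, ⟪pohozaevField Φ u v y x, ν x⟫ ∂μ :=
        hdiv _ (contDiff_pohozaevField hΦ hu₂ hv)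
    _ = _ := by
        simp_rw [inner_pohozaevField]
        rw [integral_add, integral_add, integral_add, integral_const_mul, integral_const_mul]
        all_goals exact hintegrable _ (by fun_prop)

/-- Pohozaev identity, Lemma 3.5: if `u ∈ C⁴` solves `Δ²u = f(u)`
on a smooth bounded domain `Ω′`, then with `F(u) = ∫₀^u f`, `v = −Δu`, boundary
measure `ω` on `∂Ω′` and outward unit normal `ν` (characterized through the
divergence theorem), for any `y ∈ ℝ⁴`:
`4∫_{Ω′} F(u) = ∫_{∂Ω′} ⟨x−y,ν⟩F(u) + ½∫ v²⟨x−y,ν⟩ + 2∫ (∂u/∂ν)v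
 + ∫ ((∂v/∂ν)⟨x−y,∇u⟩ + (∂u/∂ν)⟨x−y,∇v⟩ − ⟨∇u,∇v⟩⟨x−y,ν⟩)`. -/
theorem stmt18 (Ω' : Set E4) (hΩo : IsOpen Ω') (hΩb : Bornology.IsBounded Ω')
    (μ : Measure E4) [IsFiniteMeasure μ] (hμfr : μ (frontier Ω')ᶜ = 0)
    (ν : E4 → E4) (hν : Continuous ν) (hνn : ∀ x ∈ frontier Ω', ‖ν x‖ = 1)
    (hdiv : ∀ F : E4 → E4, ContDiff ℝ 1 F →
      (∫ x in Ω', divg F x) = ∫ x, (inner ℝ (F x) (ν x) : ℝ) ∂μ)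
    (u : E4 → ℝ) (hu : ContDiff ℝ 4 u) (f : ℝ → ℝ) (hf : Continuous f)
    (heq : ∀ x ∈ Ω', lap (lap u) x = f (u x)) (y : E4) :
    4 * (∫ x in Ω', (∫ s in (0:ℝ)..(u x), f s)) =
      (∫ x, (inner ℝ (x - y) (ν x) : ℝ) * (∫ s in (0:ℝ)..(u x), f s) ∂μ)
      + (1 / 2) * (∫ x, (-(lap u x)) ^ 2 * (inner ℝ (x - y) (ν x) : ℝ) ∂μ)
      + 2 * (∫ x, (inner ℝ (gradient u x) (ν x) : ℝ) * (-(lap u x)) ∂μ)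
      + ∫ x,
          ((inner ℝ (gradient (fun z => -(lap u z)) x) (ν x) : ℝ) *
              (inner ℝ (x - y) (gradient u x) : ℝ)
            + (inner ℝ (gradient u x) (ν x) : ℝ) *
              (inner ℝ (x - y) (gradient (fun z => -(lap u z)) x) : ℝ)
            - (inner ℝ (gradient u x) (gradient (fun z => -(lap u z)) x) : ℝ) *
              (inner ℝ (x - y) (ν x) : ℝ)) ∂μ :=
  stmt18_general Ω' hΩo hΩb μ hμfr ν hν hdiv u hu f hf heq y
end
end
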